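/- For every n-state direction-determinate graph-walking automaton A whose transitions are backward deterministic (reversible transition function), there exists a halting automaton B^R with 2n+1 states, obtained by adding a fresh non-reenterable initial state to the reversed automaton, whose transitions are reversible and whose computation on any finite graph is finite. -/

import Mathlib

attribute [local instance 10] Classical.propDecidable

/-- A signature: directions with an involutive opposite, node labels,
initial labels, and the set of directions allowed at each label. -/
structure Signature where
  Dir : Type
  neg : Dir → Dir
  neg_neg : ∀ d, neg (neg d) = d
  Lab : Type
  isInit : Lab → Bool
  dirs : Lab → Set Dir

/-- A finite graph over a signature. -/
structure SGraph (S : Signature) where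
  V : Type
  fin : Finite V
  v0 : V
  lab : V → S.Lab
  move : V → S.Dir → Option V
  move_inv : ∀ v d w, move v d = some w → move w (S.neg d) = some v
  move_defined : ∀ v d, (move v d).isSome ↔ d ∈ S.dirs (lab v)
  init_iff : ∀ v, S.isInit (lab v) = true ↔ v = v0

/-- A deterministic graph-walking automaton over a signature. -/
structure GWA (S : Signature) where
  Q : Type
  finQ : Finite Q
  q0 : Q
  F : Q → S.Lab → Bool
  δ : Q → S.Lab → Option (Q × S.Dir)
  δ_dir : ∀ q a p d, δ q a = some (p, d) → d ∈ S.dirs a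
  δ_not_F : ∀ q a, F q a = true → δ q a = none

namespace GWA

variable {S : Signature}

/-- One step of the computation, over an abstract node set with a move
function and a labelling. -/
def stepOn (A : GWA S) {V : Type} (move : V → S.Dir → Option V) (lab : V → S.Lab) :
    A.Q × V → Option (A.Q × V) := fun c =>
  if A.F c.1 (lab c.2) = true then none
  else match A.δ c.1 (lab c.2) with
    | none => none
    | some (p, d) => (move c.2 d).map fun w => (p, w)

/-- The configuration after `t` steps, starting from configuration `c`. -/
def runOn (A : GWA S) {V : Type} (move : V → S.Dir → Option V) (lab : V → S.Lab)
    (c : A.Q × V) : ℕ → Option (A.Q × V)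
  | 0 => some c
  | n + 1 => (runOn A move lab c n).bind (A.stepOn move lab)

def runFrom (A : GWA S) (G : SGraph S) (c : A.Q × G.V) : ℕ → Option (A.Q × G.V) :=
  A.runOn G.move G.lab c

/-- The computation of `A` on `G`, from the initial configuration. -/
def run (A : GWA S) (G : SGraph S) : ℕ → Option (A.Q × G.V) :=
  A.runFrom G (A.q0, G.v0)

def stateAt (A : GWA S) (G : SGraph S) (c : A.Q × G.V) (t : ℕ) : Option A.Q :=
  (A.runFrom G c t).map Prod.fst

def nodeAt (A : GWA S) (G : SGraph S) (c : A.Q × G.V) (t : ℕ) : Option G.V :=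
  (A.runFrom G c t).map Prod.snd

/-- The direction used by the transition taken at time `t`. -/
def dirAt (A : GWA S) (G : SGraph S) (c : A.Q × G.V) (t : ℕ) : Option S.Dir :=
  (A.runFrom G c t).bind fun x => (A.δ x.1 (G.lab x.2)).map Prod.snd

def Accepts (A : GWA S) (G : SGraph S) : Prop :=
  ∃ n c, A.run G n = some c ∧ A.F c.1 (G.lab c.2) = true

/-- A GWA is returning if it can accept only at the initial node. -/
def Returning (A : GWA S) : Prop :=
  ∀ q a, A.F q a = true → S.isInit a = true

/-- A GWA is halting if its computation on every (finite) graph is finite. -/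
def Halting (A : GWA S) : Prop :=
  ∀ G : SGraph S, ∃ n, A.run G n = none

/-- Direction-determinate: every state is entered in a unique direction. -/
def DirDet (A : GWA S) (d : A.Q → S.Dir) : Prop :=
  ∀ p a q d', A.δ p a = some (q, d') → d' = d q

/-- Backward determinism of the transition function. -/
def BackDet (A : GWA S) (d : A.Q → S.Dir) : Prop :=
  ∀ a q p1 p2, A.δ p1 a = some (q, d q) → A.δ p2 a = some (q, d q) → p1 = p2

/-- A reversible graph-walking automaton. -/
def Reversible (A : GWA S) : Prop :=
  (∃ d : A.Q → S.Dir, A.DirDet d ∧ A.BackDet d) ∧ A.Returning ∧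
    ∀ a q1 q2, A.F q1 a = true → A.F q2 a = true → q1 = q2

/-- The state `q` is entered via a transition in direction `d` taken during
the computation of `A` on `G`. -/
def EnteredVia (A : GWA S) (G : SGraph S) (d : S.Dir) (q : A.Q) : Prop :=
  ∃ t c, A.run G t = some c ∧ A.δ c.1 (G.lab c.2) = some (q, d)

end GWA

/-!
Let `A` start instead in a fresh state that no transition enters, acting as `q0` at the initial
node, and stop it as soon as it comes back to its initial configuration. The transitions stay
direction-determinate and backward deterministic, so the step map on configurations of a graph is
injective; started at a configuration without predecessor, it cannot cycle, and on a finite graph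
the computation stops. Acceptance is unchanged: a computation of `A` that returns to its initial
configuration repeats forever, so it never reaches an accepting configuration.
-/

theorem exists_eq_none_of_bind_injective {α : Type*} [Finite α] (f : α → Option α)
    (hf : ∀ x y z, f x = some z → f y = some z → x = y) {x₀ : α} (hx₀ : ∀ y, f y ≠ some x₀)
    (g : ℕ → Option α) (h0 : g 0 = some x₀) (hg : ∀ n, g (n + 1) = (g n).bind f) :
    ∃ n, g n = none := by
  by_contra! hsome
  choose c hc using fun n => Option.ne_none_iff_exists'.1 (hsome n)
  have hstep : ∀ n, f (c n) = some (c (n + 1)) := fun n => by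
    simpa [hc] using (hg n).symm
  have hne : ∀ i k, c i ≠ c (i + k + 1) := by
    intro i k
    induction i with
    | zero =>
      intro h
      apply hx₀ (c k)
      rw [zero_add] at h
      rw [hstep, ← h]
      simpa [hc] using h0
    | succ i ih =>
      intro h
      refine ih (hf _ _ _ (hstep i) ?_)
      rw [h, show i + 1 + k + 1 = i + k + 1 + 1 by omega]
      exact hstep _
  refine not_injective_infinite_finite c (Function.Injective.of_lt_imp_ne fun i j hij => ?_)
  obtain ⟨k, rfl⟩ := Nat.exists_eq_add_of_lt hij
  exact hne i k

namespace GWA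

variable {S : Signature}

section Runs

variable (A : GWA S) {V : Type} (move : V → S.Dir → Option V) (lab : V → S.Lab)

lemma runOn_succ (c : A.Q × V) (n : ℕ) :
    A.runOn move lab c (n + 1) = (A.runOn move lab c n).bind (A.stepOn move lab) := rfl

lemma runOn_add (c : A.Q × V) (m n : ℕ) :
    A.runOn move lab c (m + n) = (A.runOn move lab c m).bind (A.runOn move lab · n) := by
  induction n with
  | zero => cases A.runOn move lab c m <;> rfl
  | succ n ih => rw [← add_assoc, runOn_succ, ih]; cases A.runOn move lab c m <;> rfl

lemma runOn_eq_none_of_le {c : A.Q × V} {m n : ℕ} (hmn : m ≤ n)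
    (h : A.runOn move lab c m = none) : A.runOn move lab c n = none := by
  obtain ⟨k, rfl⟩ := Nat.exists_eq_add_of_le hmn
  rw [runOn_add, h]
  rfl

variable {A move lab}

lemma stepOn_eq_none_of_F {c : A.Q × V} (h : A.F c.1 (lab c.2) = true) :
    A.stepOn move lab c = none := by
  simp [stepOn, h]

lemma stepOn_eq_none_of_δ {c : A.Q × V} (h : A.δ c.1 (lab c.2) = none) :
    A.stepOn move lab c = none := by
  simp [stepOn, h]

lemma exists_δ_of_stepOn_eq_some {c e : A.Q × V} (h : A.stepOn move lab c = some e) :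
    ∃ dir, A.δ c.1 (lab c.2) = some (e.1, dir) ∧ move c.2 dir = some e.2 := by
  unfold stepOn at h
  split_ifs at h
  split at h
  · simp at h
  · rename_i p dir hδ
    obtain ⟨w, hw, rfl⟩ := Option.map_eq_some_iff.1 h
    exact ⟨dir, hδ, hw⟩

lemma stepOn_eq_map_of_δ_eq_map {B : GWA S} (f : A.Q → B.Q) {s : B.Q} {q : A.Q} {v : V}
    (hF : B.F s (lab v) = A.F q (lab v))
    (hδ : B.δ s (lab v) = (A.δ q (lab v)).map (Prod.map f id)) :
    B.stepOn move lab (s, v) = (A.stepOn move lab (q, v)).map (Prod.map f id) := by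
  unfold stepOn
  rw [hF, hδ]
  split_ifs
  · rfl
  · rcases A.δ q (lab v) with _ | ⟨p, dir⟩
    · rfl
    · simp only [Option.map_some, Option.map_map]
      rfl

end Runs

section Graph

variable (A : GWA S) (G : SGraph S)

lemma run_succ (n : ℕ) : A.run G (n + 1) = (A.run G n).bind (A.stepOn G.move G.lab) := rfl

lemma stepOn_injective {d : A.Q → S.Dir} (hdd : A.DirDet d) (hbd : A.BackDet d)
    {c₁ c₂ e : A.Q × G.V} (h₁ : A.stepOn G.move G.lab c₁ = some e)
    (h₂ : A.stepOn G.move G.lab c₂ = some e) : c₁ = c₂ := by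
  obtain ⟨dir₁, hδ₁, hm₁⟩ := exists_δ_of_stepOn_eq_some h₁
  obtain ⟨dir₂, hδ₂, hm₂⟩ := exists_δ_of_stepOn_eq_some h₂
  obtain rfl := hdd _ _ _ _ hδ₁
  obtain rfl := hdd _ _ _ _ hδ₂
  have hv : c₁.2 = c₂.2 :=
    Option.some.inj ((G.move_inv _ _ _ hm₁).symm.trans (G.move_inv _ _ _ hm₂))
  rw [hv] at hδ₁
  exact Prod.ext (hbd _ _ _ _ hδ₁ hδ₂) hv

theorem halting_of_dirDet_of_backDet {d : A.Q → S.Dir} (hdd : A.DirDet d) (hbd : A.BackDet d)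
    (hq0 : ∀ p a c, A.δ p a = some c → c.1 ≠ A.q0) : A.Halting := by
  intro G
  have := A.finQ
  have := G.fin
  refine exists_eq_none_of_bind_injective (A.stepOn G.move G.lab)
    (fun _ _ _ => A.stepOn_injective G hdd hbd) (fun c h => ?_) (A.run G) rfl (A.run_succ G)
  obtain ⟨dir, hδ, -⟩ := exists_δ_of_stepOn_eq_some h
  exact hq0 _ _ _ hδ rfl

lemma run_add_of_run_eq_init {t : ℕ} (h : A.run G t = some (A.q0, G.v0)) (k : ℕ) :
    A.run G (t + k) = A.run G k := by
  rw [run, runFrom, runOn_add, ← runFrom, ← run, h]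
  rfl

lemma run_ne_init_of_accepting {u : ℕ} {c : A.Q × G.V} (hu : A.run G u = some c)
    (hc : A.F c.1 (G.lab c.2) = true) :
    ∀ t, 1 ≤ t → t ≤ u → A.run G t ≠ some (A.q0, G.v0) := by
  intro t ht htu hret
  have hhalt : A.run G (u + 1) = none := by
    rw [run_succ, hu]
    exact stepOn_eq_none_of_F hc
  rw [show u + 1 = t + (u + 1 - t) by omega, A.run_add_of_run_eq_init G hret] at hhalt
  have : A.run G u = none := A.runOn_eq_none_of_le G.move G.lab (by omega) hhalt
  simp [hu] at this

end Graph

section FreshStart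

variable (A : GWA S)

/-- The state of `A` whose transition the automaton `A.freshStart` performs. The fresh initial
state `none` acts as `q0` at the initial node; a copy of `q0` is blocked there, which stops the
computation when `A` returns to its initial configuration; the second copy of `A.Q` is inert and
only pads the state count to `2n + 1`. -/
noncomputable def freshStartState : Option (A.Q ⊕ A.Q) → S.Lab → Option A.Q
  | none, a => if S.isInit a = true then some A.q0 else none
  | some (.inl q), a => if q = A.q0 ∧ S.isInit a = true then none else some q
  | some (.inr _), _ => none

lemma eq_of_freshStartState_eq_some {s₁ s₂ : Option (A.Q ⊕ A.Q)} {a : S.Lab} {q : A.Q}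
    (h₁ : A.freshStartState s₁ a = some q) (h₂ : A.freshStartState s₂ a = some q) :
    s₁ = s₂ := by
  rcases s₁ with _ | q₁ | q₁ <;> rcases s₂ with _ | q₂ | q₂ <;> grind [freshStartState]

noncomputable def freshStart : GWA S where
  Q := Option (A.Q ⊕ A.Q)
  finQ := by have := A.finQ; infer_instance
  q0 := none
  F s a := (A.freshStartState s a).any (A.F · a)
  δ s a := (A.freshStartState s a).bind fun q => (A.δ q a).map (Prod.map (some ∘ .inl) id)
  δ_dir s a p dir h := by
    obtain ⟨q, -, hq⟩ := Option.bind_eq_some_iff.1 h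
    obtain ⟨⟨p', dir'⟩, hδ, he⟩ := Option.map_eq_some_iff.1 hq
    cases he
    exact A.δ_dir _ _ _ _ hδ
  δ_not_F s a h := by
    obtain ⟨q, hs, hF⟩ := (Option.any_eq_true _ _).1 h
    simp [hs, A.δ_not_F _ _ hF]

def toFreshStart (q : A.Q) : A.freshStart.Q := some (.inl q)

def freshStartDir (d : A.Q → S.Dir) : A.freshStart.Q → S.Dir :=
  fun s => s.elim (d A.q0) (Sum.elim d d)

lemma card_freshStart : Nat.card A.freshStart.Q = 2 * Nat.card A.Q + 1 := by
  have := A.finQ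
  change Nat.card (Option (A.Q ⊕ A.Q)) = _
  rw [Finite.card_option, Nat.card_sum, two_mul]

lemma freshStart_δ_eq_some {s : A.freshStart.Q} {a : S.Lab} {s' : A.freshStart.Q}
    {dir : S.Dir} :
    A.freshStart.δ s a = some (s', dir) ↔
      ∃ q p, A.freshStartState s a = some q ∧ A.δ q a = some (p, dir) ∧
        s' = A.toFreshStart p := by
  simp only [freshStart, Option.bind_eq_some_iff, Option.map_eq_some_iff, Prod.exists,
    Prod.map, toFreshStart]
  grind

lemma freshStart_δ_ne_q0 {s : A.freshStart.Q} {a : S.Lab} {c : A.freshStart.Q × S.Dir}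
    (h : A.freshStart.δ s a = some c) : c.1 ≠ A.freshStart.q0 := by
  obtain ⟨_, _, -, -, hc⟩ := (A.freshStart_δ_eq_some (s' := c.1) (dir := c.2)).1 h
  rw [hc]
  exact Option.some_ne_none _

variable {A}

lemma freshStart_dirDet {d : A.Q → S.Dir} (hdd : A.DirDet d) :
    A.freshStart.DirDet (A.freshStartDir d) := by
  intro s a s' dir h
  obtain ⟨_, p, -, hδ, rfl⟩ := A.freshStart_δ_eq_some.1 h
  exact hdd _ _ _ _ hδ

lemma freshStart_backDet {d : A.Q → S.Dir} (hbd : A.BackDet d) :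
    A.freshStart.BackDet (A.freshStartDir d) := by
  intro a s' s₁ s₂ h₁ h₂
  obtain ⟨q₁, p, hs₁, hδ₁, rfl⟩ := A.freshStart_δ_eq_some.1 h₁
  obtain ⟨q₂, p', hs₂, hδ₂, hp⟩ := A.freshStart_δ_eq_some.1 h₂
  obtain rfl : p = p' := Sum.inl_injective (Option.some_injective _ hp)
  obtain rfl : q₁ = q₂ := hbd _ _ _ _ hδ₁ hδ₂
  exact A.eq_of_freshStartState_eq_some hs₁ hs₂

lemma freshStart_F_toFreshStart {q : A.Q} {a : S.Lab} :
    A.freshStart.F (A.toFreshStart q) a = true ↔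
      ¬(q = A.q0 ∧ S.isInit a = true) ∧ A.F q a = true := by
  by_cases h : q = A.q0 ∧ S.isInit a = true <;>
    simp [freshStart, freshStartState, toFreshStart, h]

variable (A) (G : SGraph S)

lemma freshStart_F_init :
    A.freshStart.F A.freshStart.q0 (G.lab G.v0) = A.F A.q0 (G.lab G.v0) := by
  simp [freshStart, freshStartState, (G.init_iff _).2 rfl]

lemma freshStart_run_one :
    A.freshStart.run G 1 = (A.run G 1).map (Prod.map A.toFreshStart id) := by
  have hs : A.freshStartState none (G.lab G.v0) = some A.q0 := by
    simp [freshStartState, (G.init_iff _).2 rfl]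
  exact stepOn_eq_map_of_δ_eq_map _ (by simp [freshStart, hs])
    (by simp only [freshStart, hs, Option.bind_some]; rfl)

lemma freshStart_stepOn_toFreshStart (c : A.Q × G.V) :
    A.freshStart.stepOn G.move G.lab (Prod.map A.toFreshStart id c) =
      if c = (A.q0, G.v0) then none
      else (A.stepOn G.move G.lab c).map (Prod.map A.toFreshStart id) := by
  obtain ⟨q, v⟩ := c
  change A.freshStart.stepOn _ _ (A.toFreshStart q, v) = _
  split_ifs with h
  · obtain ⟨rfl, rfl⟩ := Prod.mk.inj h
    exact stepOn_eq_none_of_δ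
      (by simp [freshStart, freshStartState, toFreshStart, (G.init_iff _).2 rfl])
  · have hs : A.freshStartState (A.toFreshStart q) (G.lab v) = some q := by
      grind [freshStartState, toFreshStart, G.init_iff]
    exact stepOn_eq_map_of_δ_eq_map _ (by simp [freshStart, hs])
      (by simp only [freshStart, hs, Option.bind_some]; rfl)

lemma freshStart_run_of_no_return {t : ℕ} (ht : 1 ≤ t)
    (hret : ∀ s, 1 ≤ s → s < t → A.run G s ≠ some (A.q0, G.v0)) :
    A.freshStart.run G t = (A.run G t).map (Prod.map A.toFreshStart id) := by
  induction t, ht using Nat.le_induction with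
  | base => exact A.freshStart_run_one G
  | succ t ht ih =>
    rw [run_succ, run_succ, ih fun s h₁ h₂ => hret s h₁ (by omega)]
    rcases hA : A.run G t with _ | c
    · rfl
    · have hc : c ≠ (A.q0, G.v0) := fun h => hret t ht (by omega) (hA.trans (by rw [h]))
      simp [A.freshStart_stepOn_toFreshStart G, hc]

lemma exists_run_of_freshStart_run {t : ℕ} (ht : 1 ≤ t) {c : A.freshStart.Q × G.V}
    (h : A.freshStart.run G t = some c) :
    ∃ c', A.run G t = some c' ∧ c = Prod.map A.toFreshStart id c' := by
  induction t, ht using Nat.le_induction generalizing c with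
  | base =>
    rw [freshStart_run_one] at h
    obtain ⟨c', hc', rfl⟩ := Option.map_eq_some_iff.1 h
    exact ⟨c', hc', rfl⟩
  | succ t ht ih =>
    obtain ⟨b, hb, hstep⟩ := Option.bind_eq_some_iff.1 h
    obtain ⟨c', hc', rfl⟩ := ih hb
    rw [freshStart_stepOn_toFreshStart] at hstep
    split_ifs at hstep
    obtain ⟨c'', hc'', rfl⟩ := Option.map_eq_some_iff.1 hstep
    exact ⟨c'', by rw [run_succ, hc']; exact hc'', rfl⟩

theorem freshStart_accepts_iff : A.freshStart.Accepts G ↔ A.Accepts G := by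
  constructor
  · rintro ⟨t, c, hc, hF⟩
    rcases Nat.eq_zero_or_pos t with rfl | ht
    · cases hc
      exact ⟨0, _, rfl, by rwa [← freshStart_F_init]⟩
    · obtain ⟨⟨q, v⟩, hA, rfl⟩ := A.exists_run_of_freshStart_run G ht hc
      exact ⟨t, _, hA, (freshStart_F_toFreshStart.1 hF).2⟩
  · rintro ⟨u, c, hu, hF⟩
    rcases Nat.eq_zero_or_pos u with rfl | hu₀
    · cases hu
      exact ⟨0, _, rfl, by rwa [freshStart_F_init]⟩
    · have hret := A.run_ne_init_of_accepting G hu hF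
      have hc : ¬(c.1 = A.q0 ∧ S.isInit (G.lab c.2) = true) := fun ⟨hq, hinit⟩ =>
        hret u hu₀ le_rfl (by rw [hu, ← hq, ← (G.init_iff _).1 hinit])
      have hrun : A.freshStart.run G u = some (Prod.map A.toFreshStart id c) := by
        rw [A.freshStart_run_of_no_return G hu₀ fun s h₁ h₂ => hret s h₁ h₂.le, hu]
        rfl
      exact ⟨u, _, hrun, freshStart_F_toFreshStart.2 ⟨hc, hF⟩⟩

end FreshStart

end GWA

/-- every n-state direction-determinate GWA with backward
deterministic transitions has an equivalent halting automaton with 2n+1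
states, with reversible transitions and a non-reenterable initial state,
whose computation on every finite graph is finite. -/
theorem stmt3 (S : Signature) (A : GWA S) (n : ℕ) (hn : Nat.card A.Q = n)
    (d : A.Q → S.Dir) (hdd : A.DirDet d) (hbd : A.BackDet d) :
    ∃ B : GWA S, Nat.card B.Q = 2 * n + 1 ∧
      (∃ dB : B.Q → S.Dir, B.DirDet dB ∧ B.BackDet dB) ∧
      (∀ p a c, B.δ p a = some c → c.1 ≠ B.q0) ∧
      B.Halting ∧
      (∀ G : SGraph S, B.Accepts G ↔ A.Accepts G) := by
  subst hn
  have hdd' := A.freshStart_dirDet hdd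
  have hbd' := A.freshStart_backDet hbd
  exact ⟨A.freshStart, A.card_freshStart, ⟨_, hdd', hbd'⟩, fun _ _ _ => A.freshStart_δ_ne_q0,
    A.freshStart.halting_of_dirDet_of_backDet hdd' hbd' fun _ _ _ => A.freshStart_δ_ne_q0,
    A.freshStart_accepts_iff⟩
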